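/- Let E : ℝ^n → ℝ be L-smooth with L > 0, let 0 < α ≤ 1/L, and suppose the gradient error e satisfies ‖e‖ ≤ (√5 − 2)‖∇E(x)‖. Then the inexact gradient step x⁺ = x − α(∇E(x) + e) satisfies E(x⁺) ≤ E(x). -/
import Mathlib


open scoped RealInnerProductSpace

private lemma aux_arith (L α a b N ip : ℝ) (hLpos : 0 < L) (hα : 0 < α)
    (hLα : L * α ≤ 1) (ha : 0 ≤ a) (hb : 0 ≤ b) (hN : 0 ≤ N) (hNle : N ≤ a + b)
    (hip : -(a * b) ≤ ip) (hb' : b ≤ (Real.sqrt 5 - 2) * a) :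
    -α * (a ^ 2 + ip) + L / 2 * (α * N) ^ 2 ≤ 0 := by
  have hs : Real.sqrt 5 ^ 2 = 5 := Real.sq_sqrt (by norm_num)
  have hN2 : N ^ 2 ≤ (a + b) ^ 2 := by nlinarith [mul_self_le_mul_self hN hNle]
  have step1 : L / 2 * (α * N) ^ 2 ≤ α / 2 * (a + b) ^ 2 := by
    nlinarith [mul_le_mul_of_nonneg_left hN2 (by positivity : (0:ℝ) ≤ L / 2 * α ^ 2),
      mul_le_mul_of_nonneg_right hLα (mul_nonneg hα.le (sq_nonneg (a + b)))]
  have step2 : -α * (a ^ 2 + ip) ≤ -α * a ^ 2 + α * (a * b) := by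
    nlinarith [mul_le_mul_of_nonneg_left hip hα.le]
  have hab : a * b ≤ (Real.sqrt 5 - 2) * a ^ 2 := by
    nlinarith [mul_le_mul_of_nonneg_left hb' ha]
  have hrho : (Real.sqrt 5 - 2) ^ 2 = 9 - 4 * Real.sqrt 5 := by
    rw [sub_sq, hs]; ring
  have hbb : b ^ 2 ≤ (9 - 4 * Real.sqrt 5) * a ^ 2 := by
    rw [← hrho]
    nlinarith [mul_self_le_mul_self hb hb']
  have hq : -a ^ 2 / 2 + 2 * (a * b) + b ^ 2 / 2 ≤ 0 := by linarith
  have step3 : -α * a ^ 2 + α * (a * b) + α / 2 * (a + b) ^ 2 ≤ 0 := by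
    nlinarith [mul_le_mul_of_nonneg_left hq hα.le]
  linarith

/-- Guaranteed descent of an inexact gradient step when `α ≤ 1/L` and the
gradient error satisfies `‖e‖ ≤ (√5 - 2) ‖∇E x‖`. -/
theorem stmt_5 {n : ℕ} (E : EuclideanSpace ℝ (Fin n) → ℝ) (L : ℝ) (hLpos : 0 < L)
    (hL : ∀ x d, E (x + d) ≤ E x + ⟪gradient E x, d⟫ + (L / 2) * ‖d‖ ^ 2)
    (α : ℝ) (hα : 0 < α) (hαL : α ≤ 1 / L)
    (x e : EuclideanSpace ℝ (Fin n))
    (he : ‖e‖ ≤ (Real.sqrt 5 - 2) * ‖gradient E x‖) :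
    E (x - α • (gradient E x + e)) ≤ E x := by
  have key := hL x (-(α • (gradient E x + e)))
  set g := gradient E x with hg
  have h1 : x + -(α • (g + e)) = x - α • (g + e) := by
    rw [sub_eq_add_neg]
  rw [h1] at key
  have hinner : ⟪g, -(α • (g + e))⟫ = -α * (‖g‖ ^ 2 + ⟪g, e⟫) := by
    rw [inner_neg_right, inner_smul_right, inner_add_right, real_inner_self_eq_norm_sq]
    ring
  have hnorm : ‖-(α • (g + e))‖ = α * ‖g + e‖ := by
    rw [norm_neg, norm_smul, Real.norm_eq_abs, abs_of_pos hα]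
  rw [hinner, hnorm] at key
  have hip : -(‖g‖ * ‖e‖) ≤ ⟪g, e⟫ :=
    neg_le_of_abs_le (abs_real_inner_le_norm g e)
  have hLα : L * α ≤ 1 := by
    rw [le_div_iff₀ hLpos] at hαL; linarith
  have main := aux_arith L α ‖g‖ ‖e‖ ‖g + e‖ ⟪g, e⟫ hLpos hα hLα (norm_nonneg _)
    (norm_nonneg _) (norm_nonneg _) (norm_add_le _ _) hip he
  linarith
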